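/- Assume x_0 ∈ range(A^T). For the randomized Kaczmarz iterates with r ≤ s, the cross-correlation satisfies E[(x_r - x_star)^T (x_s - x_star)] ≤ (1 - κ_dem^{-2})^s ||x_0 - x_star||^2 + (1 - κ_dem^{-2})^{s-r} ||A^+||^2 ||b - A x_star||^2. -/

import Mathlib

open Matrix Finset
noncomputable section

/-- Squared Euclidean norm of a vector. -/
def vnormSq {k : ℕ} (x : Fin k → ℝ) : ℝ := ∑ i, x i ^ 2

/-- Squared Frobenius norm of a matrix. -/
def frobSq {n d : ℕ} (A : Matrix (Fin n) (Fin d) ℝ) : ℝ := ∑ i, vnormSq (A i)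

/-- Row sampling probability ‖a_i‖²/‖A‖_F² used by randomized Kaczmarz. -/
def rowProb {n d : ℕ} (A : Matrix (Fin n) (Fin d) ℝ) (i : Fin n) : ℝ := vnormSq (A i) / frobSq A

/-- Spectral norm (ℓ²-operator norm) of a matrix. -/
def matSpectralNorm {n d : ℕ} (M : Matrix (Fin n) (Fin d) ℝ) : ℝ :=
  ‖LinearMap.toContinuousLinearMap (Matrix.toEuclideanLin M)‖

/-- The four Penrose conditions characterizing the Moore–Penrose pseudoinverse. -/
def IsMoorePenrose {n d : ℕ} (A : Matrix (Fin n) (Fin d) ℝ) (Ap : Matrix (Fin d) (Fin n) ℝ) : Prop :=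
  A * Ap * A = A ∧ Ap * A * Ap = Ap ∧ (A * Ap)ᵀ = A * Ap ∧ (Ap * A)ᵀ = Ap * A

/-- Demmel condition number κ_dem = ‖A⁺‖ ‖A‖_F. -/
def kdem {n d : ℕ} (A : Matrix (Fin n) (Fin d) ℝ) (Ap : Matrix (Fin d) (Fin n) ℝ) : ℝ :=
  matSpectralNorm Ap * Real.sqrt (frobSq A)

/-- One randomized Kaczmarz update using row i. -/
def rkStep {n d : ℕ} (A : Matrix (Fin n) (Fin d) ℝ) (b : Fin n → ℝ) (i : Fin n) (x : Fin d → ℝ) :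
    Fin d → ℝ := x + ((b i - A i ⬝ᵥ x) / vnormSq (A i)) • A i

/-- Randomized Kaczmarz iterates along a fixed path ω of row indices. -/
def rkSeq {n d : ℕ} (A : Matrix (Fin n) (Fin d) ℝ) (b : Fin n → ℝ) (x0 : Fin d → ℝ)
    (ω : ℕ → Fin n) : ℕ → Fin d → ℝ
  | 0 => x0
  | t + 1 => rkStep A b (ω t) (rkSeq A b x0 ω t)

/-- Extend a finite path of indices to an infinite one. -/
def extendPath {n T : ℕ} [NeZero n] (ω : Fin T → Fin n) : ℕ → Fin n :=
  fun s => if h : s < T then ω ⟨s, h⟩ else 0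

/-- Probability of a finite path of i.i.d. row indices. -/
def pathWeight {n d T : ℕ} (A : Matrix (Fin n) (Fin d) ℝ) (ω : Fin T → Fin n) : ℝ :=
  ∏ t, rowProb A (ω t)

/-- The expected one-step Kaczmarz contraction matrix I - AᵀA/‖A‖_F². -/
def kacMat {n d : ℕ} (A : Matrix (Fin n) (Fin d) ℝ) : Matrix (Fin d) (Fin d) ℝ :=
  1 - (frobSq A)⁻¹ • (Aᵀ * A)

/-- x lies in the row space range(Aᵀ). -/
def inRowSpace {n d : ℕ} (A : Matrix (Fin n) (Fin d) ℝ) (x : Fin d → ℝ) : Prop :=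
  ∃ u : Fin n → ℝ, x = Aᵀ *ᵥ u

/-- RK-RR iterates: Kaczmarz step followed by weight decay by μ. -/
def rrSeq {n d : ℕ} (A : Matrix (Fin n) (Fin d) ℝ) (b : Fin n → ℝ) (μ : ℝ) (x0 : Fin d → ℝ)
    (ω : ℕ → Fin n) : ℕ → Fin d → ℝ
  | 0 => x0
  | t + 1 => μ • rkStep A b (ω t) (rrSeq A b μ x0 ω t)

/-- Orthogonal projection step (I - a aᵀ/‖a‖²) x for row a = A i. -/
def projStep {n d : ℕ} (A : Matrix (Fin n) (Fin d) ℝ) (i : Fin n) (x : Fin d → ℝ) : Fin d → ℝ :=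
  x - ((A i ⬝ᵥ x) / vnormSq (A i)) • A i

/-- RK-RR bias sequence m_{t+1} = μ (I - a aᵀ/‖a‖²) m_t. -/
def biasSeq {n d : ℕ} (A : Matrix (Fin n) (Fin d) ℝ) (μ : ℝ) (m0 : Fin d → ℝ)
    (ω : ℕ → Fin n) : ℕ → Fin d → ℝ
  | 0 => m0
  | t + 1 => μ • projStep A (ω t) (biasSeq A μ m0 ω t)

/-- RK-RR variance sequence v_{t+1} = μ(I - aaᵀ/‖a‖²)v_t + μ (b_i - aᵀx_μ)a/‖a‖² - (1-μ)x_μ. -/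
def varSeq {n d : ℕ} (A : Matrix (Fin n) (Fin d) ℝ) (b : Fin n → ℝ) (μ : ℝ) (xmu : Fin d → ℝ)
    (ω : ℕ → Fin n) : ℕ → Fin d → ℝ
  | 0 => 0
  | t + 1 => μ • projStep A (ω t) (varSeq A b μ xmu ω t)
      + (μ * ((b (ω t) - A (ω t) ⬝ᵥ xmu) / vnormSq (A (ω t)))) • A (ω t)
      - (1 - μ) • xmu

/-- Covariance matrix Σ = I_m + v 1_m 1_mᵀ. -/
def covM (m : ℕ) (v : ℝ) : Matrix (Fin m) (Fin m) ℝ := 1 + v • Matrix.of fun _ _ => 1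

/-- Block Σ_{S,T} of the covariance matrix Σ = I + v 1 1ᵀ. -/
def subBlock {m : ℕ} (v : ℝ) (S T : Finset (Fin m)) : Matrix ↥S ↥T ℝ :=
  (covM m v).submatrix (fun i => i.1) (fun j => j.1)

/-- A deterministic adaptive algorithm that accesses at most t entries of b
(given full access to A) and outputs an estimate of the least-squares solution. -/
structure RowAccessAlg (d t : ℕ) where
  query : (n : ℕ) → Matrix (Fin n) (Fin d) ℝ → (j : Fin t) → (Fin (j : ℕ) → ℝ) → Fin n
  output : (n : ℕ) → Matrix (Fin n) (Fin d) ℝ → (Fin t → ℝ) → Fin d → ℝ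

/-- The successive answers to the algorithm's adaptive queries. -/
def RowAccessAlg.answers {d t : ℕ} (alg : RowAccessAlg d t) (n : ℕ)
    (A : Matrix (Fin n) (Fin d) ℝ) (b : Fin n → ℝ) : (j : ℕ) → j < t → ℝ
  | j, h => b (alg.query n A ⟨j, h⟩ fun i => alg.answers n A b i (i.isLt.trans h))
  termination_by j _ => j

/-- The algorithm's output estimate on the problem (A, b). -/
def RowAccessAlg.run {d t : ℕ} (alg : RowAccessAlg d t) (n : ℕ)
    (A : Matrix (Fin n) (Fin d) ℝ) (b : Fin n → ℝ) : Fin d → ℝ :=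
  alg.output n A fun j => alg.answers n A b j j.isLt

/-! Write `e t = x t - x⋆`, `z = b - A x⋆` and `K = I - AᵀA / ‖A‖_F²`. Since `Aᵀ z = 0`, one
Kaczmarz step gives `E[e (t+1) | e t] = K (e t)` and
`E[‖e (t+1)‖² | e t] = ⟨e t, K (e t)⟩ + ‖z‖² / ‖A‖_F²`. The errors stay in the row space of `A`,
where `0 ≤ ⟨e, K e⟩ ≤ ρ ‖e‖²` with `ρ = 1 - κ_dem⁻²`; Cauchy–Schwarz for the semidefinite form of
`K` upgrades this to `‖K e‖ ≤ ρ ‖e‖`, hence `⟨e, K^k e⟩ ≤ ρ^k ‖e‖²`. Conditioning on the first `r`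
indices turns the cross-correlation into `E⟨e r, K^(s-r) (e r)⟩ ≤ ρ^(s-r) E‖e r‖²`, and the
mean-square recursion `E‖e (t+1)‖² ≤ ρ E‖e t‖² + ‖z‖² / ‖A‖_F²` has `‖A⁺‖² ‖z‖²` as its fixed
point, so `E‖e r‖² ≤ ρ^r ‖e 0‖² + ‖A⁺‖² ‖z‖²`. -/

section Norms

variable {m k : ℕ}

lemma vnormSq_eq_dotProduct (x : Fin k → ℝ) : vnormSq x = x ⬝ᵥ x := by
  simp [vnormSq, dotProduct, sq]

lemma vnormSq_nonneg (x : Fin k → ℝ) : 0 ≤ vnormSq x :=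
  sum_nonneg fun _ _ => sq_nonneg _

lemma vnormSq_pos {x : Fin k → ℝ} (hx : x ≠ 0) : 0 < vnormSq x := by
  obtain ⟨i, hi⟩ := Function.ne_iff.1 hx
  exact sum_pos' (fun _ _ => sq_nonneg _) ⟨i, mem_univ i, sq_pos_of_ne_zero hi⟩

lemma dotProduct_sq_le (x y : Fin k → ℝ) : (x ⬝ᵥ y) ^ 2 ≤ vnormSq x * vnormSq y :=
  sum_mul_sq_le_sq_mul_sq univ x y

lemma vnormSq_mulVec_le_frobSq (A : Matrix (Fin m) (Fin k) ℝ) (x : Fin k → ℝ) :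
    vnormSq (A *ᵥ x) ≤ frobSq A * vnormSq x := by
  rw [frobSq, sum_mul]
  exact sum_le_sum fun i _ => dotProduct_sq_le (A i) x

lemma vnormSq_mulVec_le (M : Matrix (Fin m) (Fin k) ℝ) (x : Fin k → ℝ) :
    vnormSq (M *ᵥ x) ≤ matSpectralNorm M ^ 2 * vnormSq x := by
  have hnorm {l : ℕ} (y : Fin l → ℝ) : vnormSq y = ‖WithLp.toLp 2 y‖ ^ 2 := by
    simp [EuclideanSpace.real_norm_sq_eq, vnormSq]
  rw [hnorm, hnorm x, ← mul_pow]
  gcongr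
  exact (LinearMap.toContinuousLinearMap (toEuclideanLin M)).le_opNorm (WithLp.toLp 2 x)

end Norms

section RowSpace

variable {n d : ℕ} (A : Matrix (Fin n) (Fin d) ℝ)

def rowSpace : Submodule ℝ (Fin d → ℝ) := LinearMap.range Aᵀ.mulVecLin

variable {A}

lemma mem_rowSpace_iff {x : Fin d → ℝ} : x ∈ rowSpace A ↔ inRowSpace A x :=
  ⟨fun ⟨u, hu⟩ => ⟨u, hu.symm⟩, fun ⟨u, hu⟩ => ⟨u, hu.symm⟩⟩

lemma row_mem_rowSpace (i : Fin n) : A i ∈ rowSpace A :=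
  ⟨Pi.single i 1, by ext; simp⟩

lemma transpose_mulVec_mem_rowSpace (u : Fin n → ℝ) : Aᵀ *ᵥ u ∈ rowSpace A :=
  ⟨u, rfl⟩

end RowSpace

lemma frobSq_nonneg {n d : ℕ} (A : Matrix (Fin n) (Fin d) ℝ) : 0 ≤ frobSq A :=
  sum_nonneg fun _ _ => vnormSq_nonneg _

lemma frobSq_pos {n d : ℕ} [NeZero n] {A : Matrix (Fin n) (Fin d) ℝ} (hrows : ∀ i, A i ≠ 0) :
    0 < frobSq A :=
  sum_pos' (fun _ _ => vnormSq_nonneg _) ⟨0, mem_univ _, vnormSq_pos (hrows 0)⟩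

lemma kdem_sq {n d : ℕ} (A : Matrix (Fin n) (Fin d) ℝ) (Ap : Matrix (Fin d) (Fin n) ℝ) :
    kdem A Ap ^ 2 = matSpectralNorm Ap ^ 2 * frobSq A := by
  rw [kdem, mul_pow, Real.sq_sqrt (frobSq_nonneg A)]

namespace IsMoorePenrose

variable {n d : ℕ} {A : Matrix (Fin n) (Fin d) ℝ} {Ap : Matrix (Fin d) (Fin n) ℝ}

lemma mul_mul_transpose (hAp : IsMoorePenrose A Ap) : Ap * A * Aᵀ = Aᵀ := by
  rw [← hAp.2.2.2, ← transpose_mul, ← Matrix.mul_assoc, hAp.1]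

lemma transpose_mul_mul (hAp : IsMoorePenrose A Ap) : Aᵀ * (A * Ap) = Aᵀ := by
  rw [← hAp.2.2.1, ← transpose_mul, hAp.1]

lemma transpose_mulVec_sub_mulVec (hAp : IsMoorePenrose A Ap) (b : Fin n → ℝ) :
    Aᵀ *ᵥ (b - A *ᵥ (Ap *ᵥ b)) = 0 := by
  rw [mulVec_sub, mulVec_mulVec, mulVec_mulVec, Matrix.mul_assoc, hAp.transpose_mul_mul, sub_self]

lemma mulVec_mem_rowSpace (hAp : IsMoorePenrose A Ap) (b : Fin n → ℝ) :
    Ap *ᵥ b ∈ rowSpace A := by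
  have hfactor : Ap = Aᵀ * (Apᵀ * Ap) := by
    conv_lhs => rw [← hAp.2.1, ← hAp.2.2.2, transpose_mul, Matrix.mul_assoc]
  rw [hfactor, ← mulVec_mulVec]
  exact transpose_mulVec_mem_rowSpace _

lemma mulVec_mulVec_of_mem_rowSpace (hAp : IsMoorePenrose A Ap) {x : Fin d → ℝ}
    (hx : x ∈ rowSpace A) : Ap *ᵥ (A *ᵥ x) = x := by
  obtain ⟨u, rfl⟩ := hx
  rw [mulVecLin_apply, mulVec_mulVec, mulVec_mulVec, hAp.mul_mul_transpose]

lemma vnormSq_le_of_mem_rowSpace (hAp : IsMoorePenrose A Ap) {x : Fin d → ℝ}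
    (hx : x ∈ rowSpace A) : vnormSq x ≤ matSpectralNorm Ap ^ 2 * vnormSq (A *ᵥ x) := by
  conv_lhs => rw [← hAp.mulVec_mulVec_of_mem_rowSpace hx]
  exact vnormSq_mulVec_le Ap (A *ᵥ x)

lemma one_le_kdem_sq [NeZero n] (hAp : IsMoorePenrose A Ap) (hrows : ∀ i, A i ≠ 0) :
    1 ≤ kdem A Ap ^ 2 := by
  have hrow := (hAp.vnormSq_le_of_mem_rowSpace (row_mem_rowSpace 0)).trans
    (mul_le_mul_of_nonneg_left (vnormSq_mulVec_le_frobSq A (A 0)) (sq_nonneg _))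
  rw [← mul_assoc] at hrow
  rw [kdem_sq]
  exact le_of_mul_le_mul_right (by simpa using hrow) (vnormSq_pos (hrows 0))

end IsMoorePenrose

def kacRate {n d : ℕ} (A : Matrix (Fin n) (Fin d) ℝ) (Ap : Matrix (Fin d) (Fin n) ℝ) : ℝ :=
  1 - (kdem A Ap ^ 2)⁻¹

lemma kacRate_nonneg {n d : ℕ} [NeZero n] {A : Matrix (Fin n) (Fin d) ℝ}
    {Ap : Matrix (Fin d) (Fin n) ℝ} (hAp : IsMoorePenrose A Ap) (hrows : ∀ i, A i ≠ 0) :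
    0 ≤ kacRate A Ap :=
  sub_nonneg.2 (inv_le_one_of_one_le₀ (hAp.one_le_kdem_sq hrows))

/-- `‖A⁺‖² ‖b - A x⋆‖²` is the fixed point of the mean-square recursion
`E ↦ ρ E + ‖b - A x⋆‖² / ‖A‖_F²`. -/
lemma kacRate_mul_sq_add_inv_frobSq {n d : ℕ} [NeZero n] {A : Matrix (Fin n) (Fin d) ℝ}
    {Ap : Matrix (Fin d) (Fin n) ℝ} (hAp : IsMoorePenrose A Ap) (hrows : ∀ i, A i ≠ 0) :
    kacRate A Ap * matSpectralNorm Ap ^ 2 + (frobSq A)⁻¹ = matSpectralNorm Ap ^ 2 := by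
  have hκ : matSpectralNorm Ap ^ 2 * frobSq A ≠ 0 := by
    rw [← kdem_sq]
    exact (zero_lt_one.trans_le (hAp.one_le_kdem_sq hrows)).ne'
  have hP : matSpectralNorm Ap ≠ 0 := fun h => hκ (by simp [h])
  have hF : frobSq A ≠ 0 := right_ne_zero_of_mul hκ
  rw [kacRate, kdem_sq]
  field_simp
  ring

section KacMat

variable {n d : ℕ} {A : Matrix (Fin n) (Fin d) ℝ} {Ap : Matrix (Fin d) (Fin n) ℝ}

lemma kacMat_transpose (A : Matrix (Fin n) (Fin d) ℝ) : (kacMat A)ᵀ = kacMat A := by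
  simp [kacMat, transpose_sub, transpose_smul, transpose_mul]

lemma kacMat_mulVec (A : Matrix (Fin n) (Fin d) ℝ) (x : Fin d → ℝ) :
    kacMat A *ᵥ x = x - (frobSq A)⁻¹ • (Aᵀ *ᵥ (A *ᵥ x)) := by
  rw [kacMat, sub_mulVec, one_mulVec, smul_mulVec, ← mulVec_mulVec]

lemma kacMat_pow_mulVec_mem_rowSpace {x : Fin d → ℝ} (hx : x ∈ rowSpace A) (k : ℕ) :
    (kacMat A ^ k) *ᵥ x ∈ rowSpace A := by
  induction k with
  | zero => simpa using hx
  | succ k ih =>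
    rw [pow_succ', ← mulVec_mulVec, kacMat_mulVec]
    exact sub_mem ih (Submodule.smul_mem _ _ (transpose_mulVec_mem_rowSpace _))

lemma dotProduct_kacMat_mulVec_self (A : Matrix (Fin n) (Fin d) ℝ) (x : Fin d → ℝ) :
    x ⬝ᵥ kacMat A *ᵥ x = vnormSq x - (frobSq A)⁻¹ * vnormSq (A *ᵥ x) := by
  rw [kacMat_mulVec, dotProduct_sub, dotProduct_smul, dotProduct_mulVec, vecMul_transpose,
    vnormSq_eq_dotProduct, vnormSq_eq_dotProduct, dotProduct_comm, smul_eq_mul]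

lemma dotProduct_kacMat_mulVec_self_nonneg (A : Matrix (Fin n) (Fin d) ℝ) (x : Fin d → ℝ) :
    0 ≤ x ⬝ᵥ kacMat A *ᵥ x := by
  rw [dotProduct_kacMat_mulVec_self, sub_nonneg]
  calc (frobSq A)⁻¹ * vnormSq (A *ᵥ x) ≤ (frobSq A)⁻¹ * (frobSq A * vnormSq x) := by
        gcongr
        · exact inv_nonneg.2 (frobSq_nonneg A)
        · exact vnormSq_mulVec_le_frobSq A x
    _ ≤ vnormSq x := by
        rw [← mul_assoc]
        exact mul_le_of_le_one_left (vnormSq_nonneg x)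
          (inv_mul_le_one_of_le₀ le_rfl (frobSq_nonneg A))

lemma dotProduct_kacMat_mulVec_self_le (hAp : IsMoorePenrose A Ap) {x : Fin d → ℝ}
    (hx : x ∈ rowSpace A) : x ⬝ᵥ kacMat A *ᵥ x ≤ kacRate A Ap * vnormSq x := by
  rw [dotProduct_kacMat_mulVec_self, kacRate, sub_mul, one_mul, kdem_sq]
  refine sub_le_sub_left ?_ _
  calc (matSpectralNorm Ap ^ 2 * frobSq A)⁻¹ * vnormSq x
      ≤ (matSpectralNorm Ap ^ 2 * frobSq A)⁻¹ * (matSpectralNorm Ap ^ 2 * vnormSq (A *ᵥ x)) := by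
        exact mul_le_mul_of_nonneg_left (hAp.vnormSq_le_of_mem_rowSpace hx)
          (inv_nonneg.2 (mul_nonneg (sq_nonneg _) (frobSq_nonneg A)))
    _ = ((matSpectralNorm Ap ^ 2)⁻¹ * matSpectralNorm Ap ^ 2) *
          ((frobSq A)⁻¹ * vnormSq (A *ᵥ x)) := by ring
    _ ≤ (frobSq A)⁻¹ * vnormSq (A *ᵥ x) :=
        mul_le_of_le_one_left (mul_nonneg (inv_nonneg.2 (frobSq_nonneg A)) (vnormSq_nonneg _))
          (inv_mul_le_one_of_le₀ le_rfl (sq_nonneg _))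

lemma vnormSq_kacMat_mulVec_le (hAp : IsMoorePenrose A Ap) {x : Fin d → ℝ}
    (hx : x ∈ rowSpace A) : vnormSq (kacMat A *ᵥ x) ≤ kacRate A Ap ^ 2 * vnormSq x := by
  set y := kacMat A *ᵥ x
  have hy : y ∈ rowSpace A := by simpa using kacMat_pow_mulVec_mem_rowSpace hx 1
  have hxy : x ⬝ᵥ kacMat A *ᵥ y = vnormSq y := by
    rw [dotProduct_mulVec, ← kacMat_transpose A, vecMul_transpose, vnormSq_eq_dotProduct]
  have hyx : y ⬝ᵥ kacMat A *ᵥ x = vnormSq y := by rw [vnormSq_eq_dotProduct]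
  have hcs := (Matrix.toBilin' (kacMat A)).apply_mul_apply_le_of_forall_zero_le
    (fun v => by simpa only [toBilin'_apply'] using dotProduct_kacMat_mulVec_self_nonneg A v) x y
  simp only [toBilin'_apply', hxy, hyx] at hcs
  have hbound : vnormSq y * vnormSq y ≤ (kacRate A Ap ^ 2 * vnormSq x) * vnormSq y := by
    calc vnormSq y * vnormSq y ≤ (x ⬝ᵥ kacMat A *ᵥ x) * (y ⬝ᵥ kacMat A *ᵥ y) := hcs
      _ ≤ (kacRate A Ap * vnormSq x) * (kacRate A Ap * vnormSq y) :=
          mul_le_mul (dotProduct_kacMat_mulVec_self_le hAp hx)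
            (dotProduct_kacMat_mulVec_self_le hAp hy) (dotProduct_kacMat_mulVec_self_nonneg A y)
            ((dotProduct_kacMat_mulVec_self_nonneg A x).trans
              (dotProduct_kacMat_mulVec_self_le hAp hx))
      _ = (kacRate A Ap ^ 2 * vnormSq x) * vnormSq y := by ring
  rcases (vnormSq_nonneg y).eq_or_lt with hzero | hpos
  · rw [← hzero]
    exact mul_nonneg (sq_nonneg _) (vnormSq_nonneg x)
  · exact le_of_mul_le_mul_right hbound hpos

lemma vnormSq_kacMat_pow_mulVec_le (hAp : IsMoorePenrose A Ap) {x : Fin d → ℝ}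
    (hx : x ∈ rowSpace A) (k : ℕ) :
    vnormSq ((kacMat A ^ k) *ᵥ x) ≤ (kacRate A Ap ^ k) ^ 2 * vnormSq x := by
  induction k with
  | zero => simp
  | succ k ih =>
    rw [pow_succ', ← mulVec_mulVec]
    calc vnormSq (kacMat A *ᵥ (kacMat A ^ k) *ᵥ x)
        ≤ kacRate A Ap ^ 2 * vnormSq ((kacMat A ^ k) *ᵥ x) :=
          vnormSq_kacMat_mulVec_le hAp (kacMat_pow_mulVec_mem_rowSpace hx k)
      _ ≤ kacRate A Ap ^ 2 * ((kacRate A Ap ^ k) ^ 2 * vnormSq x) := by gcongr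
      _ = (kacRate A Ap ^ (k + 1)) ^ 2 * vnormSq x := by ring

lemma dotProduct_kacMat_pow_mulVec_self_le (hAp : IsMoorePenrose A Ap)
    (hρ : 0 ≤ kacRate A Ap) {x : Fin d → ℝ} (hx : x ∈ rowSpace A) (k : ℕ) :
    x ⬝ᵥ (kacMat A ^ k) *ᵥ x ≤ kacRate A Ap ^ k * vnormSq x := by
  refine (le_abs_self _).trans
    (abs_le_of_sq_le_sq ?_ (mul_nonneg (pow_nonneg hρ k) (vnormSq_nonneg x)))
  calc (x ⬝ᵥ (kacMat A ^ k) *ᵥ x) ^ 2 ≤ vnormSq x * vnormSq ((kacMat A ^ k) *ᵥ x) :=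
        dotProduct_sq_le _ _
    _ ≤ vnormSq x * ((kacRate A Ap ^ k) ^ 2 * vnormSq x) := by
        gcongr
        · exact vnormSq_nonneg x
        · exact vnormSq_kacMat_pow_mulVec_le hAp hx k
    _ = (kacRate A Ap ^ k * vnormSq x) ^ 2 := by ring

end KacMat

section Paths

variable {n d : ℕ} (A : Matrix (Fin n) (Fin d) ℝ)

lemma pathWeight_nonneg {T : ℕ} (ω : Fin T → Fin n) : 0 ≤ pathWeight A ω :=
  prod_nonneg fun _ _ => div_nonneg (vnormSq_nonneg _) (frobSq_nonneg A)

lemma sum_rowProb (hF : frobSq A ≠ 0) : ∑ i, rowProb A i = 1 := by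
  simp_rw [rowProb, ← sum_div]
  exact div_self hF

lemma sum_pathWeight (hF : frobSq A ≠ 0) (T : ℕ) : ∑ ω : Fin T → Fin n, pathWeight A ω = 1 := by
  simp only [pathWeight]
  rw [← Fintype.prod_sum (fun (_ : Fin T) i => rowProb A i), sum_rowProb A hF, prod_const_one]

lemma pathWeight_append {r k : ℕ} (u : Fin r → Fin n) (v : Fin k → Fin n) :
    pathWeight A (Fin.append u v) = pathWeight A u * pathWeight A v := by
  simp [pathWeight, Fin.prod_univ_add]

lemma sum_pathWeight_smul_append {M : Type*} [AddCommMonoid M] [Module ℝ M] {r k : ℕ}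
    (f : (Fin (r + k) → Fin n) → M) :
    ∑ ω, pathWeight A ω • f ω =
      ∑ u : Fin r → Fin n, pathWeight A u •
        ∑ v : Fin k → Fin n, pathWeight A v • f (Fin.append u v) := by
  rw [← (Fin.appendEquiv r k).sum_comp, Fintype.sum_prod_type]
  refine sum_congr rfl fun u _ => ?_
  rw [smul_sum]
  refine sum_congr rfl fun v _ => ?_
  change pathWeight A (Fin.append u v) • f (Fin.append u v) = _
  rw [pathWeight_append, mul_smul]

lemma sum_pathWeight_smul_fin_one {M : Type*} [AddCommMonoid M] [Module ℝ M]
    (f : (Fin 1 → Fin n) → M) :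
    ∑ v, pathWeight A v • f v = ∑ i, rowProb A i • f (fun _ => i) :=
  Fintype.sum_equiv (Equiv.funUnique (Fin 1) (Fin n)) _ _ fun v => by
    have hv : (fun _ => v 0) = v := funext fun j => by rw [Subsingleton.elim j 0]
    simp [pathWeight, hv]

end Paths

section Iterates

variable {n d : ℕ} {A : Matrix (Fin n) (Fin d) ℝ} {b : Fin n → ℝ}

lemma rkSeq_congr (x : Fin d → ℝ) {ω ω' : ℕ → Fin n} {t : ℕ} (h : ∀ u < t, ω u = ω' u) :
    rkSeq A b x ω t = rkSeq A b x ω' t := by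
  induction t with
  | zero => rfl
  | succ t ih =>
    simp only [rkSeq]
    rw [ih fun u hu => h u (hu.trans t.lt_succ_self), h t t.lt_succ_self]

lemma rkSeq_add (x : Fin d → ℝ) (ω : ℕ → Fin n) (r k : ℕ) :
    rkSeq A b x ω (r + k) = rkSeq A b (rkSeq A b x ω r) (fun t => ω (r + t)) k := by
  induction k with
  | zero => rfl
  | succ k ih => exact congrArg (rkStep A b (ω (r + k))) ih

variable [NeZero n]

lemma rkSeq_extendPath_append_left (x : Fin d → ℝ) {r k : ℕ} (u : Fin r → Fin n)
    (v : Fin k → Fin n) :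
    rkSeq A b x (extendPath (Fin.append u v)) r = rkSeq A b x (extendPath u) r :=
  rkSeq_congr x fun t ht => by
    simp [extendPath, ht, Nat.lt_add_right k ht, Fin.append, Fin.addCases]

lemma rkSeq_extendPath_append (x : Fin d → ℝ) {r k : ℕ} (u : Fin r → Fin n)
    (v : Fin k → Fin n) :
    rkSeq A b x (extendPath (Fin.append u v)) (r + k) =
      rkSeq A b (rkSeq A b x (extendPath u) r) (extendPath v) k := by
  rw [rkSeq_add, rkSeq_extendPath_append_left]
  exact rkSeq_congr _ fun t ht => by
    simp [extendPath, ht, Fin.append, Fin.addCases]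

lemma rkSeq_extendPath_one (x : Fin d → ℝ) (v : Fin 1 → Fin n) :
    rkSeq A b x (extendPath v) 1 = rkStep A b (v 0) x := by
  simp [rkSeq, extendPath]

end Iterates

section Step

variable {n d : ℕ} {A : Matrix (Fin n) (Fin d) ℝ} {b : Fin n → ℝ} {xstar : Fin d → ℝ}

lemma rkStep_sub (i : Fin n) (x : Fin d → ℝ) :
    rkStep A b i x - xstar = (x - xstar) +
      (((b - A *ᵥ xstar) i - A i ⬝ᵥ (x - xstar)) / vnormSq (A i)) • A i := by
  have hcoeff : (b - A *ᵥ xstar) i - A i ⬝ᵥ (x - xstar) = b i - A i ⬝ᵥ x := by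
    rw [Pi.sub_apply, dotProduct_sub]
    simp only [mulVec]
    ring
  rw [hcoeff, rkStep]
  abel

lemma rkStep_sub_mem_rowSpace {x : Fin d → ℝ} (hx : x - xstar ∈ rowSpace A) (i : Fin n) :
    rkStep A b i x - xstar ∈ rowSpace A := by
  rw [rkStep_sub]
  exact add_mem hx (Submodule.smul_mem _ _ (row_mem_rowSpace i))

lemma rkSeq_sub_mem_rowSpace {x : Fin d → ℝ} (hx : x - xstar ∈ rowSpace A) (ω : ℕ → Fin n)
    (t : ℕ) : rkSeq A b x ω t - xstar ∈ rowSpace A := by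
  induction t with
  | zero => exact hx
  | succ t ih => exact rkStep_sub_mem_rowSpace ih (ω t)

lemma rowProb_mul_div_vnormSq {i : Fin n} (hrow : A i ≠ 0) (c : ℝ) :
    rowProb A i * (c / vnormSq (A i)) = (frobSq A)⁻¹ * c := by
  rw [rowProb]
  field_simp [(vnormSq_pos hrow).ne']

lemma sum_rowProb_smul_rkStep_sub [NeZero n] (hrows : ∀ i, A i ≠ 0)
    (hz : Aᵀ *ᵥ (b - A *ᵥ xstar) = 0) (x : Fin d → ℝ) :
    ∑ i, rowProb A i • (rkStep A b i x - xstar) = kacMat A *ᵥ (x - xstar) := by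
  set e := x - xstar
  set z := b - A *ᵥ xstar
  have hterm (i : Fin n) : rowProb A i • (rkStep A b i x - xstar) =
      rowProb A i • e + (frobSq A)⁻¹ • ((z i - A i ⬝ᵥ e) • A i) := by
    rw [rkStep_sub, smul_add, smul_smul, smul_smul, rowProb_mul_div_vnormSq (hrows i)]
  have hsum : ∑ i, (z i - A i ⬝ᵥ e) • A i = Aᵀ *ᵥ z - Aᵀ *ᵥ (A *ᵥ e) := by
    simp only [mulVec_transpose, vecMul_eq_sum, sub_smul, sum_sub_distrib]
    rfl
  rw [sum_congr rfl fun i _ => hterm i, sum_add_distrib, ← sum_smul,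
    sum_rowProb A (frobSq_pos hrows).ne', one_smul, ← smul_sum, hsum, hz, zero_sub,
    kacMat_mulVec, smul_neg, sub_eq_add_neg]

lemma sum_rowProb_mul_vnormSq_rkStep_sub [NeZero n] (hrows : ∀ i, A i ≠ 0) (x : Fin d → ℝ) :
    ∑ i, rowProb A i * vnormSq (rkStep A b i x - xstar) =
      (x - xstar) ⬝ᵥ kacMat A *ᵥ (x - xstar) + (frobSq A)⁻¹ * vnormSq (b - A *ᵥ xstar) := by
  -- with `β = (b - A *ᵥ xstar) i - A i ⬝ᵥ (x - xstar)`, the terms `2 β (A i ⬝ᵥ (x - xstar)) + β²`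
  -- of the expanded square combine to `(b - A *ᵥ xstar) i ^ 2 - (A i ⬝ᵥ (x - xstar)) ^ 2`
  have hterm (i : Fin n) : rowProb A i * vnormSq (rkStep A b i x - xstar) =
      rowProb A i * vnormSq (x - xstar) +
        (frobSq A)⁻¹ * ((b - A *ᵥ xstar) i ^ 2 - (A i ⬝ᵥ (x - xstar)) ^ 2) := by
    have hrow := (vnormSq_pos (hrows i)).ne'
    rw [rkStep_sub, vnormSq_eq_dotProduct, vnormSq_eq_dotProduct (x - xstar)]
    simp only [add_dotProduct, dotProduct_add, smul_dotProduct, dotProduct_smul, smul_eq_mul,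
      dotProduct_comm (x - xstar) (A i), ← vnormSq_eq_dotProduct]
    rw [rowProb]
    field_simp
    ring
  rw [sum_congr rfl fun i _ => hterm i, sum_add_distrib, ← sum_mul,
    sum_rowProb A (frobSq_pos hrows).ne', one_mul, ← mul_sum, sum_sub_distrib,
    dotProduct_kacMat_mulVec_self]
  change _ + _ * (vnormSq (b - A *ᵥ xstar) - vnormSq (A *ᵥ (x - xstar))) = _
  ring

end Step

section Expectation

variable {n d : ℕ} [NeZero n] {A : Matrix (Fin n) (Fin d) ℝ} {b : Fin n → ℝ}
  {xstar : Fin d → ℝ}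

lemma sum_pathWeight_smul_rkSeq_sub (hrows : ∀ i, A i ≠ 0)
    (hz : Aᵀ *ᵥ (b - A *ᵥ xstar) = 0) (x : Fin d → ℝ) (t : ℕ) :
    ∑ ω : Fin t → Fin n, pathWeight A ω • (rkSeq A b x (extendPath ω) t - xstar) =
      (kacMat A ^ t) *ᵥ (x - xstar) := by
  induction t with
  | zero => simp [pathWeight, rkSeq]
  | succ t ih =>
    rw [sum_pathWeight_smul_append A]
    simp only [rkSeq_extendPath_append, rkSeq_extendPath_one, sum_pathWeight_smul_fin_one A,
      sum_rowProb_smul_rkStep_sub hrows hz, ← mulVec_smul, ← mulVec_sum, ih, mulVec_mulVec,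
      pow_succ']

lemma sum_pathWeight_mul_vnormSq_rkSeq_sub_le (hrows : ∀ i, A i ≠ 0)
    {Ap : Matrix (Fin d) (Fin n) ℝ} (hAp : IsMoorePenrose A Ap) {x : Fin d → ℝ}
    (hx : x - xstar ∈ rowSpace A) (t : ℕ) :
    ∑ ω : Fin t → Fin n, pathWeight A ω * vnormSq (rkSeq A b x (extendPath ω) t - xstar) ≤
      kacRate A Ap ^ t * vnormSq (x - xstar) +
        matSpectralNorm Ap ^ 2 * vnormSq (b - A *ᵥ xstar) := by
  induction t with
  | zero => simp [pathWeight, rkSeq, mul_nonneg (sq_nonneg _) (vnormSq_nonneg _)]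
  | succ t ih =>
    set ρ := kacRate A Ap
    set c := (frobSq A)⁻¹ * vnormSq (b - A *ᵥ xstar)
    set e : (Fin t → Fin n) → Fin d → ℝ := fun u => rkSeq A b x (extendPath u) t - xstar
    have hsplit : ∑ ω : Fin (t + 1) → Fin n,
          pathWeight A ω * vnormSq (rkSeq A b x (extendPath ω) (t + 1) - xstar) =
        ∑ u, pathWeight A u * (e u ⬝ᵥ kacMat A *ᵥ e u + c) := by
      simp only [← smul_eq_mul]
      rw [sum_pathWeight_smul_append A]
      simp only [rkSeq_extendPath_append, rkSeq_extendPath_one, sum_pathWeight_smul_fin_one A]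
      simp only [smul_eq_mul, sum_rowProb_mul_vnormSq_rkStep_sub hrows, e, c]
    calc _ = ∑ u, pathWeight A u * (e u ⬝ᵥ kacMat A *ᵥ e u + c) := hsplit
      _ ≤ ∑ u, pathWeight A u * (ρ * vnormSq (e u) + c) := by
          gcongr with u
          · exact pathWeight_nonneg A u
          · exact dotProduct_kacMat_mulVec_self_le hAp (rkSeq_sub_mem_rowSpace hx _ t)
      _ = ρ * ∑ u, pathWeight A u * vnormSq (e u) + c * ∑ u, pathWeight A u := by
          rw [mul_sum, mul_sum, ← sum_add_distrib]
          exact sum_congr rfl fun u _ => by ring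
      _ = ρ * ∑ u, pathWeight A u * vnormSq (e u) + c := by
          rw [sum_pathWeight A (frobSq_pos hrows).ne', mul_one]
      _ ≤ ρ * (ρ ^ t * vnormSq (x - xstar) + matSpectralNorm Ap ^ 2 * vnormSq (b - A *ᵥ xstar))
            + c := by
          gcongr
          exact kacRate_nonneg hAp hrows
      _ = ρ ^ (t + 1) * vnormSq (x - xstar) +
            matSpectralNorm Ap ^ 2 * vnormSq (b - A *ᵥ xstar) := by
          linear_combination vnormSq (b - A *ᵥ xstar) * kacRate_mul_sq_add_inv_frobSq hAp hrows

lemma sum_pathWeight_mul_dotProduct_rkSeq_sub (hrows : ∀ i, A i ≠ 0)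
    (hz : Aᵀ *ᵥ (b - A *ᵥ xstar) = 0) (x : Fin d → ℝ) (r k : ℕ) :
    ∑ ω : Fin (r + k) → Fin n, pathWeight A ω *
        ((rkSeq A b x (extendPath ω) r - xstar) ⬝ᵥ (rkSeq A b x (extendPath ω) (r + k) - xstar)) =
      ∑ u : Fin r → Fin n, pathWeight A u *
        ((rkSeq A b x (extendPath u) r - xstar) ⬝ᵥ
          (kacMat A ^ k) *ᵥ (rkSeq A b x (extendPath u) r - xstar)) := by
  simp only [← smul_eq_mul]
  rw [sum_pathWeight_smul_append A]
  simp only [rkSeq_extendPath_append_left, rkSeq_extendPath_append, ← dotProduct_smul,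
    ← dotProduct_sum, sum_pathWeight_smul_rkSeq_sub hrows hz]

end Expectation

/-- cross-correlation bound for RK iterates, r ≤ s:
E[(x_r - x⋆)ᵀ(x_s - x⋆)] ≤ (1 - κ_dem⁻²)^s ‖x_0 - x⋆‖²
  + (1 - κ_dem⁻²)^{s-r} ‖A⁺‖² ‖b - Ax⋆‖². -/
theorem rk_cross_correlation {n d : ℕ} [NeZero n]
    (A : Matrix (Fin n) (Fin d) ℝ) (b : Fin n → ℝ) (hrows : ∀ i, A i ≠ 0)
    (Ap : Matrix (Fin d) (Fin n) ℝ) (hAp : IsMoorePenrose A Ap)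
    (xstar : Fin d → ℝ) (hx : xstar = Ap *ᵥ b)
    (x0 : Fin d → ℝ) (h0 : inRowSpace A x0) (r s : ℕ) (hrs : r ≤ s) :
    ∑ ω : Fin s → Fin n, pathWeight A ω *
        ((rkSeq A b x0 (extendPath ω) r - xstar) ⬝ᵥ (rkSeq A b x0 (extendPath ω) s - xstar))
      ≤ (1 - (kdem A Ap ^ 2)⁻¹) ^ s * vnormSq (x0 - xstar)
        + (1 - (kdem A Ap ^ 2)⁻¹) ^ (s - r) * (matSpectralNorm Ap ^ 2 * vnormSq (b - A *ᵥ xstar)) := by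
  obtain ⟨k, rfl⟩ := Nat.exists_eq_add_of_le hrs
  rw [Nat.add_sub_cancel_left]
  change _ ≤ kacRate A Ap ^ (r + k) * _ + kacRate A Ap ^ k * _
  subst hx
  have hz := hAp.transpose_mulVec_sub_mulVec b
  have he0 : x0 - Ap *ᵥ b ∈ rowSpace A :=
    sub_mem (mem_rowSpace_iff.2 h0) (hAp.mulVec_mem_rowSpace b)
  have hρ := kacRate_nonneg hAp hrows
  calc _ = ∑ u : Fin r → Fin n, pathWeight A u * ((rkSeq A b x0 (extendPath u) r - Ap *ᵥ b) ⬝ᵥ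
          (kacMat A ^ k) *ᵥ (rkSeq A b x0 (extendPath u) r - Ap *ᵥ b)) :=
        sum_pathWeight_mul_dotProduct_rkSeq_sub hrows hz x0 r k
    _ ≤ ∑ u : Fin r → Fin n, pathWeight A u *
          (kacRate A Ap ^ k * vnormSq (rkSeq A b x0 (extendPath u) r - Ap *ᵥ b)) := by
        gcongr with u
        · exact pathWeight_nonneg A u
        · exact dotProduct_kacMat_pow_mulVec_self_le hAp hρ (rkSeq_sub_mem_rowSpace he0 _ r) k
    _ = kacRate A Ap ^ k * ∑ u : Fin r → Fin n,
          pathWeight A u * vnormSq (rkSeq A b x0 (extendPath u) r - Ap *ᵥ b) := by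
        rw [mul_sum]
        exact sum_congr rfl fun u _ => by ring
    _ ≤ kacRate A Ap ^ k * (kacRate A Ap ^ r * vnormSq (x0 - Ap *ᵥ b) +
          matSpectralNorm Ap ^ 2 * vnormSq (b - A *ᵥ (Ap *ᵥ b))) := by
        gcongr
        exact sum_pathWeight_mul_vnormSq_rkSeq_sub_le hrows hAp he0 r
    _ = _ := by ring
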